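/- Let A ∈ ℝ^{n×n}, B ∈ ℝ^{n×m}, C ∈ ℝ^{ℓ×n} and s ≥ 2. Assume the observability matrix 𝓞_{s−1} = [C; CA; …; CA^{s−2}] ∈ ℝ^{(s−1)ℓ×n} has rank n and the controllability matrix 𝓒_s = [B, AB, …, A^{s−1}B] ∈ ℝ^{n×sm} has rank n. Let 𝓗_s = U Σ Vᵀ be any rank-n factorization of the block Hankel matrix 𝓗_s = 𝓞_s 𝓒_s, where U ∈ ℝ^{sℓ×n} and V ∈ ℝ^{sm×n} have orthonormal columns and Σ ∈ ℝ^{n×n} is diagonal with strictly positive diagonal entries. Partition U into Υ_f (first (s−1)ℓ rows) and Υ_l (last (s−1)ℓ rows), and define = Υ_f^† Υ_l, Ĉ = [I_ℓ 0] U, B̂ = Σ Vᵀ [I_m; 0]. Then Υ_f has rank n, and there exists an invertible T ∈ ℝ^{n×n} such that = T A T⁻¹, B̂ = T B, and Ĉ = C T⁻¹; in particular Ĉ Â^{k−1} B̂ = C A^{k−1} B for all k ≥ 1, so ERA recovers the system matrices up to a similarity transformation. -/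
import Mathlib


open Matrix

lemma isUnit_det_of_rank_eq {n : ℕ} (M : Matrix (Fin n) (Fin n) ℝ) (h : M.rank = n) :
    IsUnit M.det := by
  have hsurj : Function.Surjective M.mulVecLin := by
    rw [← LinearMap.range_eq_top]
    apply Submodule.eq_top_of_finrank_eq
    rw [← Matrix.rank, h]
    simp [Module.finrank_pi]
  have hinj : Function.Injective M.mulVecLin :=
    (LinearMap.injective_iff_surjective).mpr hsurj
  by_contra hdet
  rw [isUnit_iff_ne_zero, not_not] at hdet
  obtain ⟨v, hv, hMv⟩ := (Matrix.exists_mulVec_eq_zero_iff).mpr hdet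
  exact hv (hinj (show M.mulVecLin v = M.mulVecLin 0 by simp [hMv]))

lemma conj_pow_aux {n : ℕ} (A K L : Matrix (Fin n) (Fin n) ℝ)
    (hKL : K * L = 1) (hLK : L * K = 1) (j : ℕ) :
    (L * A * K) ^ j = L * A ^ j * K := by
  induction j with
  | zero => simpa using hLK.symm
  | succ j ih =>
    rw [pow_succ, ih, pow_succ]
    have : L * A ^ j * K * (L * A * K) = L * A ^ j * (K * L) * (A * K) := by
      simp only [Matrix.mul_assoc]
    rw [this, hKL, Matrix.mul_one]
    simp only [Matrix.mul_assoc]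

lemma submatrix_mul_id {p q r t : Type*} [Fintype q] [DecidableEq q]
    (M : Matrix p q ℝ) (N : Matrix q r ℝ) (f : t → p) :
    (M * N).submatrix f id = M.submatrix f id * N := by
  ext i j; simp [Matrix.mul_apply]

lemma id_mul_submatrix {p q r t : Type*} [Fintype q] [DecidableEq q]
    (M : Matrix p q ℝ) (N : Matrix q r ℝ) (g : t → r) :
    (M * N).submatrix id g = M * N.submatrix id g := by
  ext i j; simp [Matrix.mul_apply]


/-- The Moore–Penrose pseudoinverse of a full-column-rank real matrix,
`M^† = (MᵀM)⁻¹Mᵀ`. -/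
noncomputable def pinv {m n p : ℕ} (M : Matrix (Fin m × Fin p) (Fin n) ℝ) :
    Matrix (Fin n) (Fin m × Fin p) ℝ :=
  (Mᵀ * M)⁻¹ * Mᵀ

/-- (ERA recovers the system up to similarity.) Suppose the
observability matrix `𝓞_{s−1}` and the controllability matrix `𝓒_s` have rank `n`,
and `𝓗_s = 𝓞_s 𝓒_s = U Σ Vᵀ` is a rank-`n` factorization with `U, V` having
orthonormal columns and `Σ = diag(σ)` with `σ > 0`.  With `Υ_f` (resp. `Υ_l`) the
first (resp. last) `(s−1)ℓ` rows of `U`, `Â = Υ_f^† Υ_l`, `Ĉ = [I_ℓ 0] U`,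
`B̂ = Σ Vᵀ [I_m; 0]`, the matrix `Υ_f` has rank `n` and there is an invertible `T`
with `Â = T A T⁻¹`, `B̂ = T B`, `Ĉ = C T⁻¹`; in particular
`Ĉ Â^{k−1} B̂ = C A^{k−1} B` for all `k ≥ 1`.
(Row indices of `𝓗_s` are pairs `(block row, row within block)` in
`Fin s × Fin ℓ`, and similarly for columns.) -/
theorem era_recovers_system (n m l s : ℕ) (hs : 2 ≤ s)
    (A : Matrix (Fin n) (Fin n) ℝ) (B : Matrix (Fin n) (Fin m) ℝ)
    (C : Matrix (Fin l) (Fin n) ℝ)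
    (hobs : (Matrix.of fun (ia : Fin (s - 1) × Fin l) (k : Fin n) =>
        (C * A ^ ((ia.1 : ℕ))) ia.2 k).rank = n)
    (hctrb : (Matrix.of fun (k : Fin n) (jb : Fin s × Fin m) =>
        (A ^ ((jb.1 : ℕ)) * B) k jb.2).rank = n)
    (U : Matrix (Fin s × Fin l) (Fin n) ℝ) (V : Matrix (Fin s × Fin m) (Fin n) ℝ)
    (hU : Uᵀ * U = 1) (hV : Vᵀ * V = 1)
    (σ : Fin n → ℝ) (hσ : ∀ i, 0 < σ i)
    (hfact : (Matrix.of fun (ia : Fin s × Fin l) (jb : Fin s × Fin m) =>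
        (C * A ^ ((ia.1 : ℕ) + (jb.1 : ℕ)) * B) ia.2 jb.2) =
      U * Matrix.diagonal σ * Vᵀ) :
    let Υf := U.submatrix
      (fun pa : Fin (s - 1) × Fin l => ((Fin.castLE (Nat.sub_le s 1) pa.1), pa.2)) id
    let Υl := U.submatrix
      (fun pa : Fin (s - 1) × Fin l =>
        ((⟨(pa.1 : ℕ) + 1, by omega⟩ : Fin s), pa.2)) id
    let Ahat := pinv Υf * Υl
    let Chat := U.submatrix (fun a : Fin l => ((⟨0, by omega⟩ : Fin s), a)) id
    let Bhat := Matrix.diagonal σ *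
      Vᵀ.submatrix id (fun b : Fin m => ((⟨0, by omega⟩ : Fin s), b))
    Υf.rank = n ∧
    ∃ T : Matrix (Fin n) (Fin n) ℝ, IsUnit T.det ∧
      Ahat = T * A * T⁻¹ ∧ Bhat = T * B ∧ Chat = C * T⁻¹ ∧
      ∀ k : ℕ, 1 ≤ k → Chat * Ahat ^ (k - 1) * Bhat = C * A ^ (k - 1) * B := by
  intro Υf Υl Ahat Chat Bhat
  set Sg := Matrix.diagonal σ with hSgdef
  have hSgdet : IsUnit Sg.det := by
    rw [hSgdef, det_diagonal]
    exact isUnit_iff_ne_zero.mpr (Finset.prod_ne_zero_iff.mpr fun i _ => (hσ i).ne')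
  set O := (Matrix.of fun (ia : Fin s × Fin l) (k : Fin n) =>
      (C * A ^ ((ia.1 : ℕ))) ia.2 k) with hOdef
  set Cc := (Matrix.of fun (k : Fin n) (jb : Fin s × Fin m) =>
      (A ^ ((jb.1 : ℕ)) * B) k jb.2) with hCcdef
  set Ob := (Matrix.of fun (ia : Fin (s - 1) × Fin l) (k : Fin n) =>
      (C * A ^ ((ia.1 : ℕ))) ia.2 k) with hObdef
  -- the Hankel factorization
  have hH : O * Cc = U * Sg * Vᵀ := by
    rw [← hfact]
    ext ia jb
    have hsplit : C * A ^ ((ia.1 : ℕ) + (jb.1 : ℕ)) * B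
        = (C * A ^ ((ia.1 : ℕ))) * (A ^ ((jb.1 : ℕ)) * B) := by
      rw [pow_add, ← Matrix.mul_assoc, Matrix.mul_assoc (C * A ^ ((ia.1 : ℕ)))]
    rw [Matrix.mul_apply, Matrix.of_apply, hsplit, Matrix.mul_apply]
    rfl
  set K := Cc * V * Sg⁻¹ with hKdef
  set L := Uᵀ * O with hLdef
  have hUK : U = O * K := by
    have : O * K = (O * Cc) * V * Sg⁻¹ := by
      simp only [hKdef, Matrix.mul_assoc]
    rw [this, hH]
    calc U = U * (Sg * Sg⁻¹) := by rw [Matrix.mul_nonsing_inv _ hSgdet, Matrix.mul_one]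
      _ = U * Sg * (Vᵀ * V) * Sg⁻¹ := by
          rw [hV, Matrix.mul_one]; simp only [Matrix.mul_assoc]
      _ = U * Sg * Vᵀ * V * Sg⁻¹ := by simp only [Matrix.mul_assoc]
  have hLC : L * Cc = Sg * Vᵀ := by
    calc L * Cc = Uᵀ * (O * Cc) := by simp only [hLdef, Matrix.mul_assoc]
      _ = (Uᵀ * U) * Sg * Vᵀ := by rw [hH]; simp only [Matrix.mul_assoc]
      _ = Sg * Vᵀ := by rw [hU, Matrix.one_mul]
  have hLK : L * K = 1 := by
    calc L * K = Uᵀ * (O * K) := by simp only [hLdef, Matrix.mul_assoc]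
      _ = Uᵀ * U := by rw [← hUK]
      _ = 1 := hU
  have hKL : K * L = 1 := mul_eq_one_comm.mp hLK
  have hLdet : IsUnit L.det := Matrix.isUnit_det_of_right_inverse hLK
  have hKdet : IsUnit K.det := Matrix.isUnit_det_of_right_inverse hKL
  have hLinv : L⁻¹ = K := Matrix.inv_eq_right_inv hLK
  -- block identities
  have hΥf : Υf = Ob * K := by
    show U.submatrix _ id = _
    rw [hUK, submatrix_mul_id]
    congr 1
  have hΥl : Υl = Ob * A * K := by
    show U.submatrix _ id = _
    rw [hUK, submatrix_mul_id]
    congr 1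
    ext pa k
    show (C * A ^ ((pa.1 : ℕ) + 1)) pa.2 k = (Ob * A) pa k
    rw [pow_succ, ← Matrix.mul_assoc, Matrix.mul_apply, Matrix.mul_apply]
    rfl
  have hChat : Chat = C * K := by
    show U.submatrix _ id = _
    rw [hUK, submatrix_mul_id]
    congr 1
    ext a k
    show (C * A ^ (0 : ℕ)) a k = C a k
    rw [pow_zero, Matrix.mul_one]
  have hBhat : Bhat = L * B := by
    show Sg * Vᵀ.submatrix id _ = _
    rw [← id_mul_submatrix, ← hLC, id_mul_submatrix]
    congr 1
    ext k b
    show (A ^ (0 : ℕ) * B) k b = B k b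
    rw [pow_zero, Matrix.one_mul]
  -- rank of Υf
  have hrank : Υf.rank = n := by
    rw [hΥf, Matrix.rank_mul_eq_left_of_isUnit_det K Ob hKdet, hObdef, hobs]
  have hNdet : IsUnit (Υfᵀ * Υf).det := by
    apply isUnit_det_of_rank_eq
    rw [Matrix.rank_transpose_mul_self, hrank]
  have hpinv : pinv Υf * Υf = 1 := by
    show (Υfᵀ * Υf)⁻¹ * Υfᵀ * Υf = 1
    rw [Matrix.mul_assoc, Matrix.nonsing_inv_mul _ hNdet]
  have hAhat : Ahat = L * A * K := by
    have hΥl' : Υl = Υf * (L * A * K) := by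
      rw [hΥl, hΥf]
      calc Ob * A * K = Ob * (K * L) * A * K := by rw [hKL, Matrix.mul_one]
        _ = Ob * K * (L * A * K) := by simp only [Matrix.mul_assoc]
    show pinv Υf * Υl = _
    rw [hΥl', ← Matrix.mul_assoc, hpinv, Matrix.one_mul]
  refine ⟨hrank, L, hLdet, ?_, ?_, ?_, ?_⟩
  · rw [hAhat, hLinv]
  · rw [hBhat]
  · rw [hChat, hLinv]
  · intro k hk
    rw [hChat, hBhat, hAhat, conj_pow_aux A K L hKL hLK]
    have : C * K * (L * A ^ (k - 1) * K) * (L * B)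
        = C * (K * L) * (A ^ (k - 1) * ((K * L) * B)) := by
      simp only [Matrix.mul_assoc]
    rw [this, hKL, Matrix.mul_one, Matrix.one_mul, Matrix.mul_assoc]
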